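/- Let z ∈ ℂ with Im z ≠ 0, so that m := z − k is boundedly invertible on H (since k is bounded self-adjoint). Then for every v ∈ D(h), setting u := m^{-1}(p(z) v), the following identity holds: (1 / Im z) · Im( ( u | z · m^{-1}(h0 v) ) ) = (h0 v | v) + 2 Re( ( v | k · m^{-1}(h0 v) ) ) + ‖ m^{-1}(h0 v) ‖². -/

import Mathlib

/-! With `m = z - k` and `a = m⁻¹(h₀ v)` one has `m⁻¹(p(z) v) = a - m v` because `p(z) = h₀ - m²`;
expanding `(a - m v | z a)` with `k a = z a - h₀ v` leaves
`z ((a | a) - (v | h₀ v) + (z - z̄)(v | a))`, where `(a | a)` and `(v | h₀ v)` are real.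
Taking imaginary parts and dividing by `Im z` gives both sides as
`‖a‖² - (v | h₀ v) + 2 Re (z (v | a))`. -/

open Complex

noncomputable section

variable {H : Type*} [NormedAddCommGroup H] [InnerProductSpace ℂ H] [CompleteSpace H]

/-- The quadratic pencil `p(z) = h + z(2k - z) = h + 2z k - z²` acting on the domain of `h`. -/
def pencil (h : H →ₗ.[ℂ] H) (k : H →L[ℂ] H) (z : ℂ) : h.domain →ₗ[ℂ] H :=
  h.toFun + (2 * z) • (k.toLinearMap.comp h.domain.subtype) - z ^ 2 • h.domain.subtype

open scoped InnerProductSpace ComplexConjugate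

section

variable {E : Type*} [NormedAddCommGroup E] [InnerProductSpace ℂ E]

theorem IsSelfAdjoint.isFormalAdjoint_self [CompleteSpace E] {A : E →ₗ.[ℂ] E}
    (hA : IsSelfAdjoint A) : A.IsFormalAdjoint A := by
  have := LinearPMap.adjoint_isFormalAdjoint hA.dense_domain
  rwa [LinearPMap.isSelfAdjoint_def.mp hA] at this

theorem IsSelfAdjoint.im_inner_apply_self [CompleteSpace E] {A : E →ₗ.[ℂ] E}
    (hA : IsSelfAdjoint A) (x : A.domain) : (⟪(x : E), A x⟫_ℂ).im = 0 :=
  conj_eq_iff_im.mp <| by rw [inner_conj_symm]; exact hA.isFormalAdjoint_self x x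

theorem LinearMap.IsSymmetric.im_inner_self_apply_apply {k : E →ₗ[ℂ] E} (hk : k.IsSymmetric)
    (x : E) : (⟪x, k (k x)⟫_ℂ).im = 0 := by
  rw [← hk]
  exact inner_self_im (𝕜 := ℂ) _

theorem inner_sub_smul_eq_of_apply_eq {k : E →ₗ[ℂ] E} (hk : k.IsSymmetric) {z : ℂ}
    {a v w : E} (hka : k a = z • a - w) :
    ⟪a - (z • v - k v), z • a⟫_ℂ = z * (⟪a, a⟫_ℂ - ⟪v, w⟫_ℂ + (z - conj z) * ⟪v, a⟫_ℂ) := by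
  simp only [inner_sub_left, inner_smul_left, inner_smul_right]
  rw [hk v a, hka, inner_sub_right, inner_smul_right]
  ring

theorem im_inner_sub_smul_div_im_eq {k : E →ₗ[ℂ] E} (hk : k.IsSymmetric) {z : ℂ}
    (hz : z.im ≠ 0) {a v w : E} (hma : z • a - k a = w) (hvw : (⟪v, w⟫_ℂ).im = 0) :
    (1 / z.im) * (⟪a - (z • v - k v), z • a⟫_ℂ).im
      = (⟪w, v⟫_ℂ).re + 2 * (⟪v, k a⟫_ℂ).re + ‖a‖ ^ 2 := by
  have hka : k a = z • a - w := by rw [← hma, sub_sub_cancel]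
  have hA_re : (⟪a, a⟫_ℂ).re = ‖a‖ ^ 2 := inner_self_eq_norm_sq (𝕜 := ℂ) a
  have hA_im : (⟪a, a⟫_ℂ).im = 0 := inner_self_im (𝕜 := ℂ) a
  rw [inner_sub_smul_eq_of_apply_eq hk hka, hka, inner_sub_right, inner_smul_right,
    ← inner_conj_symm w v, conj_re, sub_conj]
  field_simp
  simp only [mul_im, mul_re, sub_re, sub_im, add_re, add_im, ofReal_re, ofReal_im, I_re, I_im,
    hA_re, hA_im, hvw]
  ring

theorem pencil_apply (h : E →ₗ.[ℂ] E) (k : E →L[ℂ] E) (z : ℂ) (v : h.domain) :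
    pencil h k z v
      = h v + k (k v) - (z • (z • (v : E) - k v) - k (z • (v : E) - k v)) := by
  simp only [pencil, LinearMap.sub_apply, LinearMap.add_apply, LinearMap.smul_apply,
    LinearMap.comp_apply, Submodule.subtype_apply, ContinuousLinearMap.coe_coe,
    LinearPMap.toFun_eq_coe, map_sub, map_smul, smul_sub, smul_smul]
  module

end

/-- With `m = z - k` boundedly invertible (inverse `minv`), for `v ∈ D(h)` and
`u := m⁻¹(p(z)v)` one has
`(1/Im z)·Im (u | z·m⁻¹(h₀v)) = (h₀v|v) + 2Re (v | k m⁻¹(h₀v)) + ‖m⁻¹(h₀v)‖²`. -/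
theorem pencil_h0_identity
    (h : H →ₗ.[ℂ] H) (hsa : IsSelfAdjoint h)
    (k : H →L[ℂ] H) (hk : IsSelfAdjoint k)
    (z : ℂ) (hz : z.im ≠ 0)
    (minv : H →L[ℂ] H)
    (hminv : ∀ x : H, minv (z • x - k x) = x ∧ z • minv x - k (minv x) = x)
    (v : h.domain) :
    (1 / z.im) * (inner ℂ (minv (pencil h k z v)) (z • minv (h v + k (k (v : H)))) : ℂ).im
      = (inner ℂ (h v + k (k (v : H))) (v : H) : ℂ).re
        + 2 * (inner ℂ (v : H) (k (minv (h v + k (k (v : H))))) : ℂ).re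
        + ‖minv (h v + k (k (v : H)))‖ ^ 2 := by
  set w := h v + k (k (v : H))
  have hu : minv (pencil h k z v) = minv w - (z • (v : H) - k v) := by
    rw [pencil_apply, map_sub, (hminv _).1]
  have hvw : (⟪(v : H), w⟫_ℂ).im = 0 := by
    rw [inner_add_right, add_im, hsa.im_inner_apply_self, zero_add]
    exact hk.isSymmetric.im_inner_self_apply_apply v
  rw [hu]
  exact im_inner_sub_smul_div_im_eq hk.isSymmetric hz (hminv w).2 hvw
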